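/- arXiv:1110.4302 — 9 statements merged into one kernel-verified Lean document; each statement's English description precedes it below -/
import Mathlib

section
/- Every nonnegative solution of the auxin transport system is conservative: if a : [0,∞) → ℝ^L is differentiable, satisfies a'(t) = f(a(t)) for all t ≥ 0, and a(t) has all components ≥ 0 for every t ≥ 0, then for all t ≥ 0 one has ∑_{i=1}^{L} a_i(t) = ∑_{i=1}^{L} a_i(0). -/
open Finset Filter

/-- `auxN G κ a i = κ + ∑_{j ~ i} a_j`. -/
noncomputable def auxN {L : ℕ} (G : SimpleGraph (Fin L)) [DecidableRel G.Adj] (κ : ℝ)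
    (a : Fin L → ℝ) (i : Fin L) : ℝ :=
  κ + ∑ j ∈ G.neighborFinset i, a j

/-- The auxin transport vector field
`f_i(a) = D·∑_{k ~ i}(a_k − a_i) + T·∑_{k ~ i}(a_k·a_i/N_k(a) − a_i·a_k/N_i(a))`. -/
noncomputable def auxF {L : ℕ} (G : SimpleGraph (Fin L)) [DecidableRel G.Adj] (κ D T : ℝ)
    (a : Fin L → ℝ) (i : Fin L) : ℝ :=
  D * ∑ k ∈ G.neighborFinset i, (a k - a i) +
    T * ∑ k ∈ G.neighborFinset i,
      (a k * a i / auxN G κ a k - a i * a k / auxN G κ a i)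

/-!
Both the diffusion and the transport term of `auxF` are sums over neighbours of a flux
`g i k` from `k` into `i` with `g k i = -g i k`. Each edge therefore contributes twice, with
opposite signs, to `∑ i, auxF a i`, which vanishes identically; so the total amount of auxin has
zero derivative and is constant along every solution.
-/

namespace SimpleGraph

variable {V M : Type*} [Fintype V] (G : SimpleGraph V) [DecidableRel G.Adj]

theorem sum_sum_neighborFinset_comm [AddCommMonoid M] (g : V → V → M) :
    ∑ i, ∑ k ∈ G.neighborFinset i, g i k = ∑ i, ∑ k ∈ G.neighborFinset i, g k i :=
  Finset.sum_comm' fun i k => by simp [G.adj_comm]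

theorem sum_sum_neighborFinset_eq_zero_of_antisymm [AddCommGroup M] [IsAddTorsionFree M]
    {g : V → V → M} (hg : ∀ i k, g k i = -g i k) :
    ∑ i, ∑ k ∈ G.neighborFinset i, g i k = 0 := by
  have hneg : ∑ i, ∑ k ∈ G.neighborFinset i, g i k = -∑ i, ∑ k ∈ G.neighborFinset i, g i k :=
    calc ∑ i, ∑ k ∈ G.neighborFinset i, g i k
        = ∑ i, ∑ k ∈ G.neighborFinset i, g k i := G.sum_sum_neighborFinset_comm g
      _ = ∑ i, ∑ k ∈ G.neighborFinset i, -g i k :=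
        Finset.sum_congr rfl fun i _ => Finset.sum_congr rfl fun k _ => hg i k
      _ = -∑ i, ∑ k ∈ G.neighborFinset i, g i k := by simp only [Finset.sum_neg_distrib]
  exact two_nsmul_eq_zero.mp ((two_nsmul _).trans (add_eq_zero_iff_eq_neg.mpr hneg))

end SimpleGraph

theorem sum_auxF_eq_zero {L : ℕ} (G : SimpleGraph (Fin L)) [DecidableRel G.Adj] (κ D T : ℝ)
    (a : Fin L → ℝ) : ∑ i, auxF G κ D T a i = 0 := by
  have hdiffusion : ∑ i, ∑ k ∈ G.neighborFinset i, (a k - a i) = 0 :=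
    G.sum_sum_neighborFinset_eq_zero_of_antisymm fun _ _ => by ring
  have htransport : ∑ i, ∑ k ∈ G.neighborFinset i,
      (a k * a i / auxN G κ a k - a i * a k / auxN G κ a i) = 0 :=
    G.sum_sum_neighborFinset_eq_zero_of_antisymm fun _ _ => by ring
  simp only [auxF, Finset.sum_add_distrib, ← Finset.mul_sum, hdiffusion, htransport,
    mul_zero, add_zero]

theorem auxin_conservative_general {L : ℕ} (G : SimpleGraph (Fin L)) [DecidableRel G.Adj]
    (κ D T : ℝ)
    (a : ℝ → Fin L → ℝ)
    (hderiv : ∀ t, 0 ≤ t → HasDerivAt a (auxF G κ D T (a t)) t) :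
    ∀ t, 0 ≤ t → ∑ i, a t i = ∑ i, a 0 i := by
  have htotal : ∀ t, 0 ≤ t → HasDerivAt (fun u => ∑ i, a u i) 0 t := fun t ht => by
    simpa only [sum_auxF_eq_zero] using
      HasDerivAt.fun_sum (u := Finset.univ) fun i _ => hasDerivAt_pi.mp (hderiv t ht) i
  intro t ht
  exact constant_of_has_deriv_right_zero
    (fun s hs => (htotal s hs.1).continuousAt.continuousWithinAt)
    (fun s hs => (htotal s hs.1).hasDerivWithinAt) t ⟨ht, le_rfl⟩

/-- Every nonnegative solution of the auxin transport system is conservative. -/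
theorem auxin_conservative {L : ℕ} (hL : 1 ≤ L) (G : SimpleGraph (Fin L)) [DecidableRel G.Adj]
    (κ D T : ℝ) (hκ : 0 < κ) (hD : 0 ≤ D) (hT : 0 < T)
    (a : ℝ → Fin L → ℝ)
    (hderiv : ∀ t, 0 ≤ t → HasDerivAt a (auxF G κ D T (a t)) t)
    (hnonneg : ∀ t, 0 ≤ t → ∀ i, 0 ≤ a t i) :
    ∀ t, 0 ≤ t → ∑ i, a t i = ∑ i, a 0 i :=
  auxin_conservative_general G κ D T a hderiv
end

section
/- Let a : [0,∞) → ℝ^L be a differentiable solution of a'(t) = f(a(t)) with a_i(0) ≥ 0 for all i. Then: (1) for every index i with a_i(0) > 0 one has a_i(t) > 0 for all t > 0; and (2) if D = 0, then for every index i with a_i(0) = 0 one has a_i(t) = 0 for all t ≥ 0. -/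
/-!
Write `f_i(a) = D ∑_{k ~ i} (a_k - a_i) + T a_i ρ_i(a)` with
`ρ_i(a) = ∑_{k ~ i} a_k (1 / N_k(a) - 1 / N_i(a))`. On a compact time interval `a` is bounded,
and as long as `a` is close to the nonnegative orthant all `N_k ≥ κ / 2`, so `ρ` is bounded.
At a most negative coordinate `a_j = -m` the diffusion term is `≥ 0`, hence `-a_j' ≤ K m`:
no coordinate can cross the barrier `-ε e^{K' t}` for `K' > K`, and `ε → 0` gives `a ≥ 0`.
Then `N ≥ κ`, `|ρ| ≤ R` on `[0, t]`, and `a_i' ≥ -(D L + |T| R) a_i`, resp. for `D = 0`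
`a_i' ≤ |T| R a_i`; Grönwall gives `a_i(t) ≥ a_i(0) e^{-Ct} > 0`,
resp. `a_i(t) ≤ a_i(0) e^{Ct} = 0`.
-/

open Finset Filter

open Set Topology

theorem le_mul_exp_of_deriv_right_le {f f' : ℝ → ℝ} {K a b : ℝ}
    (hf : ContinuousOn f (Icc a b))
    (hf' : ∀ x ∈ Ico a b, HasDerivWithinAt f (f' x) (Ici x) x)
    (bound : ∀ x ∈ Ico a b, f' x ≤ K * f x) :
    ∀ x ∈ Icc a b, f x ≤ f a * Real.exp (K * (x - a)) := by
  intro x hx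
  have := le_gronwallBound_of_liminf_deriv_right_le (ε := 0) hf
    (fun x hx _ hr => (hf' x hx).liminf_right_slope_le hr) le_rfl
    (fun x hx => by simpa using bound x hx) x hx
  rwa [gronwallBound_ε0] at this

theorem forall_le_of_deriv_right_lt_deriv_boundary {ι : Type*} [Fintype ι]
    {u u' : ι → ℝ → ℝ} {B B' : ℝ → ℝ} {a b : ℝ}
    (hu : ∀ j, ContinuousOn (u j) (Icc a b))
    (hu' : ∀ j, ∀ x ∈ Ico a b, HasDerivWithinAt (u j) (u' j x) (Ici x) x)
    (ha : ∀ j, u j a ≤ B a) (hB : ContinuousOn B (Icc a b))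
    (hB' : ∀ x ∈ Ico a b, HasDerivWithinAt B (B' x) (Ici x) x)
    (bound : ∀ x ∈ Ico a b, (∀ k, u k x ≤ B x) → ∀ j, u j x = B x → u' j x < B' x) :
    ∀ x ∈ Icc a b, ∀ j, u j x ≤ B x := by
  rcases isEmpty_or_nonempty ι with hι | hι
  · exact fun _ _ j => isEmptyElim j
  set g : ℝ → ℝ := fun x => univ.sup' univ_nonempty (u · x)
  have hug : ∀ x j, u j x ≤ g x := fun x j => le_sup' (u · x) (mem_univ j)
  set top : ℝ → Finset ι := fun x => univ.filter (u · x = g x)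
  have htop : ∀ x, (top x).Nonempty := fun x =>
    let ⟨j, _, hj⟩ := exists_mem_eq_sup' univ_nonempty (u · x)
    ⟨j, mem_filter.2 ⟨mem_univ j, hj.symm⟩⟩
  suffices ∀ x ∈ Icc a b, g x ≤ B x from fun x hx j => (hug x j).trans (this x hx)
  -- `f'` bounds the right Dini derivative of `g`: near `x` only the maximal `u j` matter
  refine image_le_of_liminf_slope_right_lt_deriv_boundary'
    (f' := fun x => (top x).sup' (htop x) (u' · x))
    (ContinuousOn.finset_sup'_apply _ fun j _ => hu j) (fun x hx r hr => ?_)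
    ((sup'_le_iff _ _).2 fun j _ => ha j) hB hB' fun x hx hgx => ?_
  · have below : ∀ j, ∀ᶠ z in 𝓝[>] x, u j z < g x + r * (z - x) := by
      intro j
      by_cases hj : u j x = g x
      · have hjr : u' j x < r :=
          (le_sup' (u' · x) (mem_filter.2 ⟨mem_univ j, hj⟩)).trans_lt hr
        filter_upwards [(hu' j x hx).Ioi_of_Ici.limsup_slope_le' (lt_irrefl x) hjr,
          self_mem_nhdsWithin] with z hz (hxz : x < z)
        rw [slope_def_field, div_lt_iff₀ (sub_pos.2 hxz)] at hz
        linarith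
      · have hcont : ContinuousWithinAt (fun z => u j z - r * (z - x)) (Ioi x) x :=
          ((hu' j x hx).continuousWithinAt.sub (by fun_prop)).mono Ioi_subset_Ici_self
        filter_upwards [hcont.eventually_lt continuousWithinAt_const
          (by simpa using (hug x j).lt_of_ne hj)] with z hz
        linarith
    refine ((eventually_all.2 below).and self_mem_nhdsWithin).frequently.mono ?_
    rintro z ⟨hz, hxz : x < z⟩
    rw [slope_def_field, div_lt_iff₀ (sub_pos.2 hxz), sub_lt_iff_lt_add']
    exact (sup'_lt_iff _).2 fun j _ => hz j
  · obtain ⟨j, hj, hj'⟩ := exists_mem_eq_sup' (htop x) (u' · x)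
    rw [hj']
    exact bound x hx (fun k => hgx ▸ hug x k) j ((mem_filter.1 hj).2.trans hgx)

namespace AuxinTransport

variable {L : ℕ} {G : SimpleGraph (Fin L)} [DecidableRel G.Adj] {κ D T : ℝ}

noncomputable def transportRate (G : SimpleGraph (Fin L)) [DecidableRel G.Adj] (κ : ℝ)
    (a : Fin L → ℝ) (i : Fin L) : ℝ :=
  ∑ k ∈ G.neighborFinset i, a k * ((auxN G κ a k)⁻¹ - (auxN G κ a i)⁻¹)

theorem auxF_eq (a : Fin L → ℝ) (i : Fin L) :
    auxF G κ D T a i =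
      D * ∑ k ∈ G.neighborFinset i, (a k - a i) + T * a i * transportRate G κ a i := by
  simp only [auxF, transportRate, mul_sum, div_eq_mul_inv]
  congr 1
  exact sum_congr rfl fun k _ => by ring

theorem card_neighborFinset_le (G : SimpleGraph (Fin L)) [DecidableRel G.Adj] (i : Fin L) :
    ((G.neighborFinset i).card : ℝ) ≤ L := by
  exact_mod_cast (card_le_univ _).trans_eq (Fintype.card_fin L)

theorem sub_mul_le_auxN {a : Fin L → ℝ} {m : ℝ} (hm : 0 ≤ m) (ha : ∀ j, -m ≤ a j)
    (k : Fin L) : κ - L * m ≤ auxN G κ a k := by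
  have hsum : (G.neighborFinset k).card • -m ≤ ∑ j ∈ G.neighborFinset k, a j :=
    card_nsmul_le_sum _ _ _ fun j _ => ha j
  rw [nsmul_eq_mul] at hsum
  have := mul_le_mul_of_nonneg_right (card_neighborFinset_le G k) hm
  unfold auxN
  linarith

theorem abs_transportRate_le {a : Fin L → ℝ} {ν M : ℝ} (hν : 0 < ν)
    (hN : ∀ k, ν ≤ auxN G κ a k) (hM : ‖a‖ ≤ M) (i : Fin L) :
    |transportRate G κ a i| ≤ 2 * L * M / ν := by
  have hinv : ∀ k, |(auxN G κ a k)⁻¹| ≤ ν⁻¹ := fun k => by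
    rw [abs_inv, abs_of_pos (hν.trans_le (hN k))]
    exact inv_anti₀ hν (hN k)
  have hterm : ∀ k,
      |a k * ((auxN G κ a k)⁻¹ - (auxN G κ a i)⁻¹)| ≤ M * (2 * ν⁻¹) := by
    intro k
    rw [abs_mul]
    refine mul_le_mul ((norm_le_pi_norm a k).trans hM) ?_ (abs_nonneg _)
      ((norm_nonneg _).trans hM)
    linarith [abs_sub (auxN G κ a k)⁻¹ (auxN G κ a i)⁻¹, hinv k, hinv i]
  calc |transportRate G κ a i|
      ≤ ∑ k ∈ G.neighborFinset i, |a k * ((auxN G κ a k)⁻¹ - (auxN G κ a i)⁻¹)| :=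
        abs_sum_le_sum_abs _ _
    _ ≤ (G.neighborFinset i).card * (M * (2 * ν⁻¹)) := by
        rw [← nsmul_eq_mul]; exact sum_le_card_nsmul _ _ _ fun k _ => hterm k
    _ ≤ L * (M * (2 * ν⁻¹)) :=
        mul_le_mul_of_nonneg_right (card_neighborFinset_le G i) (by
          have := (norm_nonneg _).trans hM; positivity)
    _ = 2 * L * M / ν := by ring

theorem abs_mul_mul_le {T x ρ R : ℝ} (hx : 0 ≤ x) (hρ : |ρ| ≤ R) :
    |T * x * ρ| ≤ |T| * R * x := by
  rw [abs_mul, abs_mul, abs_of_nonneg hx]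
  nlinarith [mul_le_mul_of_nonneg_left hρ (mul_nonneg (abs_nonneg T) hx)]

theorem neg_auxF_le_of_eq_neg (hD : 0 ≤ D) {a : Fin L → ℝ} {m R : ℝ} (hm : 0 ≤ m)
    (ha : ∀ k, -m ≤ a k) {j : Fin L} (hj : a j = -m) (hρ : |transportRate G κ a j| ≤ R) :
    -auxF G κ D T a j ≤ |T| * R * m := by
  have hdiff : 0 ≤ ∑ k ∈ G.neighborFinset j, (a k - a j) :=
    sum_nonneg fun k _ => by linarith [ha k]
  have htr : -(T * a j * transportRate G κ a j) ≤ |T| * R * m := by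
    rw [hj, show -(T * -m * transportRate G κ a j) = T * m * transportRate G κ a j by ring]
    exact (abs_le.1 (abs_mul_mul_le hm hρ)).2
  rw [auxF_eq]
  linarith [mul_nonneg hD hdiff]

theorem neg_mul_le_auxF (hD : 0 ≤ D) {a : Fin L → ℝ} (ha : ∀ k, 0 ≤ a k) {R : ℝ}
    {i : Fin L} (hρ : |transportRate G κ a i| ≤ R) :
    -((D * L + |T| * R) * a i) ≤ auxF G κ D T a i := by
  have hdiff : -(L * a i) ≤ ∑ k ∈ G.neighborFinset i, (a k - a i) := by
    have hsum : (G.neighborFinset i).card • -a i ≤ ∑ k ∈ G.neighborFinset i, (a k - a i) :=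
      card_nsmul_le_sum _ _ _ fun k _ => by linarith [ha k]
    rw [nsmul_eq_mul] at hsum
    nlinarith [mul_le_mul_of_nonneg_right (card_neighborFinset_le G i) (ha i)]
  have htr := abs_le.1 (abs_mul_mul_le (T := T) (ha i) hρ)
  rw [auxF_eq]
  nlinarith [mul_le_mul_of_nonneg_left hdiff hD]

theorem auxF_zero_le {a : Fin L → ℝ} {R : ℝ} {i : Fin L} (hai : 0 ≤ a i)
    (hρ : |transportRate G κ a i| ≤ R) : auxF G κ 0 T a i ≤ |T| * R * a i := by
  rw [auxF_eq, zero_mul, zero_add]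
  exact (abs_le.1 (abs_mul_mul_le hai hρ)).2

section Trajectory

variable {a : ℝ → Fin L → ℝ}

theorem neg_le_mul_exp_of_hasDerivAt_auxF (hκ : 0 < κ) (hD : 0 ≤ D)
    (hderiv : ∀ t, 0 ≤ t → HasDerivAt a (auxF G κ D T (a t)) t) (h0 : ∀ i, 0 ≤ a 0 i)
    {t M K ε : ℝ} (ht : 0 ≤ t) (hM : ∀ s ∈ Icc 0 t, ‖a s‖ ≤ M) (hK0 : 0 ≤ K)
    (hK : |T| * (2 * L * M / (κ / 2)) < K) (hε : 0 < ε)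
    (hsmall : L * (ε * Real.exp (K * t)) ≤ κ / 2) (i : Fin L) :
    -a t i ≤ ε * Real.exp (K * t) := by
  have hcoord : ∀ j, ∀ s, 0 ≤ s → HasDerivAt (-a · j) (-auxF G κ D T (a s) j) s :=
    fun j s hs => (hasDerivAt_pi.1 (hderiv s hs) j).neg
  have hB : ∀ x, HasDerivAt (fun s => ε * Real.exp (K * s)) (ε * Real.exp (K * x) * K) x :=
    fun x => by simpa [mul_assoc] using (((hasDerivAt_id x).const_mul K).exp).const_mul ε
  refine forall_le_of_deriv_right_lt_deriv_boundary
    (fun j s hs => (hcoord j s hs.1).continuousAt.continuousWithinAt)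
    (fun j s hs => (hcoord j s hs.1).hasDerivWithinAt)
    (fun j => by simpa using (neg_nonpos.2 (h0 j)).trans hε.le)
    (fun s _ => (hB s).continuousAt.continuousWithinAt) (fun s _ => (hB s).hasDerivWithinAt)
    (fun x hx hlow j hj => ?_) t ⟨ht, le_rfl⟩ i
  set m := ε * Real.exp (K * x)
  have hm : 0 < m := by positivity
  have hLm : L * m ≤ κ / 2 := hsmall.trans' <| mul_le_mul_of_nonneg_left
    (mul_le_mul_of_nonneg_left (Real.exp_le_exp.2 (mul_le_mul_of_nonneg_left hx.2.le hK0)) hε.le)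
    (Nat.cast_nonneg L)
  have hlow' : ∀ k, -m ≤ a x k := fun k => neg_le.1 (hlow k)
  have hN : ∀ k, κ / 2 ≤ auxN G κ (a x) k := fun k => by
    linarith [sub_mul_le_auxN (G := G) (κ := κ) hm.le hlow' k]
  have hbound := neg_auxF_le_of_eq_neg (T := T) hD hm.le hlow' (neg_eq_iff_eq_neg.1 hj)
    (abs_transportRate_le (half_pos hκ) hN (hM x ⟨hx.1, hx.2.le⟩) j)
  show -auxF G κ D T (a x) j < m * K
  linarith [mul_lt_mul_of_pos_right hK hm]

theorem nonneg_of_hasDerivAt_auxF (hκ : 0 < κ) (hD : 0 ≤ D)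
    (hderiv : ∀ t, 0 ≤ t → HasDerivAt a (auxF G κ D T (a t)) t) (h0 : ∀ i, 0 ≤ a 0 i)
    {t : ℝ} (ht : 0 ≤ t) (i : Fin L) : 0 ≤ a t i := by
  obtain ⟨M, hM⟩ := isCompact_Icc.exists_bound_of_continuousOn (s := Icc 0 t)
    fun s hs => (hderiv s hs.1).continuousAt.continuousWithinAt
  set K := |T| * (2 * L * M / (κ / 2)) + 1
  have hK0 : 0 ≤ K := by
    have := (norm_nonneg _).trans (hM 0 ⟨le_rfl, ht⟩)
    positivity
  have hlim : Tendsto (fun ε => ε * Real.exp (K * t)) (𝓝[>] 0) (𝓝 0) :=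
    ((continuous_mul_const _).tendsto' 0 0 (zero_mul _)).mono_left nhdsWithin_le_nhds
  have hsmall := (hlim.const_mul (L : ℝ)).eventually
    (ge_mem_nhds (show (L : ℝ) * 0 < κ / 2 by simpa using half_pos hκ))
  have := ge_of_tendsto hlim <| (hsmall.and self_mem_nhdsWithin).mono fun ε hε =>
    neg_le_mul_exp_of_hasDerivAt_auxF hκ hD hderiv h0 ht hM hK0 (lt_add_one _) hε.2 hε.1 i
  linarith

theorem exists_abs_transportRate_le (hκ : 0 < κ)
    (hderiv : ∀ t, 0 ≤ t → HasDerivAt a (auxF G κ D T (a t)) t)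
    (hnonneg : ∀ t, 0 ≤ t → ∀ i, 0 ≤ a t i) (t : ℝ) :
    ∃ R, ∀ s ∈ Icc 0 t, ∀ i, |transportRate G κ (a s) i| ≤ R := by
  obtain ⟨M, hM⟩ := isCompact_Icc.exists_bound_of_continuousOn (s := Icc 0 t)
    fun s hs => (hderiv s hs.1).continuousAt.continuousWithinAt
  refine ⟨2 * L * M / κ, fun s hs i => abs_transportRate_le hκ (fun k => ?_) (hM s hs) i⟩
  simpa using sub_mul_le_auxN (G := G) (κ := κ) le_rfl (by simpa using hnonneg s hs.1) k

theorem pos_of_hasDerivAt_auxF (hD : 0 ≤ D)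
    (hderiv : ∀ t, 0 ≤ t → HasDerivAt a (auxF G κ D T (a t)) t)
    (hnonneg : ∀ t, 0 ≤ t → ∀ i, 0 ≤ a t i) {t R : ℝ} (ht : 0 ≤ t) {i : Fin L}
    (hR : ∀ s ∈ Icc 0 t, |transportRate G κ (a s) i| ≤ R) (hi : 0 < a 0 i) : 0 < a t i := by
  have hcoord : ∀ s ∈ Icc 0 t, HasDerivAt (-a · i) (-auxF G κ D T (a s) i) s :=
    fun s hs => (hasDerivAt_pi.1 (hderiv s hs.1) i).neg
  have := le_mul_exp_of_deriv_right_le (K := -(D * L + |T| * R))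
    (fun s hs => (hcoord s hs).continuousAt.continuousWithinAt)
    (fun s hs => (hcoord s (Ico_subset_Icc_self hs)).hasDerivWithinAt)
    (fun s hs => by
      have := neg_mul_le_auxF (T := T) hD (hnonneg s hs.1) (hR s (Ico_subset_Icc_self hs))
      linarith)
    t ⟨ht, le_rfl⟩
  nlinarith [Real.exp_pos (-(D * L + |T| * R) * (t - 0))]

theorem eq_zero_of_hasDerivAt_auxF_zero
    (hderiv : ∀ t, 0 ≤ t → HasDerivAt a (auxF G κ 0 T (a t)) t)
    (hnonneg : ∀ t, 0 ≤ t → ∀ i, 0 ≤ a t i) {t R : ℝ} (ht : 0 ≤ t) {i : Fin L}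
    (hR : ∀ s ∈ Icc 0 t, |transportRate G κ (a s) i| ≤ R) (hi : a 0 i = 0) : a t i = 0 := by
  have hcoord : ∀ s ∈ Icc 0 t, HasDerivAt (a · i) (auxF G κ 0 T (a s) i) s :=
    fun s hs => hasDerivAt_pi.1 (hderiv s hs.1) i
  have := le_mul_exp_of_deriv_right_le (K := |T| * R)
    (fun s hs => (hcoord s hs).continuousAt.continuousWithinAt)
    (fun s hs => (hcoord s (Ico_subset_Icc_self hs)).hasDerivWithinAt)
    (fun s hs => auxF_zero_le (hnonneg s hs.1 i) (hR s (Ico_subset_Icc_self hs)))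
    t ⟨ht, le_rfl⟩
  rw [hi, zero_mul] at this
  exact this.antisymm (hnonneg t ht i)

end Trajectory

end AuxinTransport

open AuxinTransport

theorem auxin_positivity_general {L : ℕ} (G : SimpleGraph (Fin L)) [DecidableRel G.Adj]
    (κ D T : ℝ) (hκ : 0 < κ) (hD : 0 ≤ D)
    (a : ℝ → Fin L → ℝ)
    (hderiv : ∀ t, 0 ≤ t → HasDerivAt a (auxF G κ D T (a t)) t)
    (hnonneg : ∀ i, 0 ≤ a 0 i) :
    (∀ i, 0 < a 0 i → ∀ t, 0 < t → 0 < a t i) ∧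
    (D = 0 → ∀ i, a 0 i = 0 → ∀ t, 0 ≤ t → a t i = 0) := by
  have hnn : ∀ t, 0 ≤ t → ∀ i, 0 ≤ a t i := fun t ht =>
    nonneg_of_hasDerivAt_auxF hκ hD hderiv hnonneg ht
  refine ⟨fun i hi t ht => ?_, fun hD0 i hi t ht => ?_⟩
  · obtain ⟨R, hR⟩ := exists_abs_transportRate_le hκ hderiv hnn t
    exact pos_of_hasDerivAt_auxF hD hderiv hnn ht.le (hR · · i) hi
  · subst hD0
    obtain ⟨R, hR⟩ := exists_abs_transportRate_le hκ hderiv hnn t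
    exact eq_zero_of_hasDerivAt_auxF_zero hderiv hnn ht (hR · · i) hi

/-- Positivity is preserved; for pure transport (`D = 0`), zero components
stay zero. -/
theorem auxin_positivity {L : ℕ} (hL : 1 ≤ L) (G : SimpleGraph (Fin L)) [DecidableRel G.Adj]
    (κ D T : ℝ) (hκ : 0 < κ) (hD : 0 ≤ D) (hT : 0 < T)
    (a : ℝ → Fin L → ℝ)
    (hderiv : ∀ t, 0 ≤ t → HasDerivAt a (auxF G κ D T (a t)) t)
    (hnonneg : ∀ i, 0 ≤ a 0 i) :
    (∀ i, 0 < a 0 i → ∀ t, 0 < t → 0 < a t i) ∧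
    (D = 0 → ∀ i, a 0 i = 0 → ∀ t, 0 ≤ t → a t i = 0) :=
  auxin_positivity_general G κ D T hκ hD a hderiv hnonneg
end

section
/- Assume the graph G is connected and D > 0. Then the only critical point of the auxin transport system in the nonnegative orthant having a zero component is the origin: if a ∈ ℝ^L satisfies a_i ≥ 0 for all i, f(a) = 0, and a_{i0} = 0 for some index i0, then a_i = 0 for all i. -/
open Finset Filter

/-- For a connected graph and `D > 0`, the only nonnegative critical point
with a vanishing component is the origin. -/
theorem auxin_critical_zero_component {L : ℕ} (hL : 1 ≤ L) (G : SimpleGraph (Fin L))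
    [DecidableRel G.Adj] (hG : G.Connected) (κ D T : ℝ) (hκ : 0 < κ) (hD : 0 < D) (hT : 0 < T)
    (a : Fin L → ℝ) (ha : ∀ i, 0 ≤ a i)
    (hcrit : ∀ i, auxF G κ D T a i = 0)
    (i0 : Fin L) (h0 : a i0 = 0) :
    ∀ i, a i = 0 := by
  -- Step: if a i = 0 then a j = 0 for every neighbor j
  have key : ∀ i : Fin L, a i = 0 → ∀ j ∈ G.neighborFinset i, a j = 0 := by
    intro i hi
    have h := hcrit i
    unfold auxF at h
    rw [hi] at h
    simp only [mul_zero, zero_mul, zero_div, sub_zero, sub_self, Finset.sum_const_zero,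
      mul_zero, add_zero] at h
    have hsum : ∑ k ∈ G.neighborFinset i, a k = 0 := by
      rcases mul_eq_zero.1 h with h' | h'
      · exact absurd h' (ne_of_gt hD)
      · exact h'
    intro j hj
    exact (Finset.sum_eq_zero_iff_of_nonneg (fun k _ => ha k)).1 hsum j hj
  have walk0 : ∀ (u v : Fin L), G.Walk u v → a u = 0 → a v = 0 := by
    intro u v w
    induction w with
    | nil => exact id
    | cons hadj p ih =>
      intro hu
      exact ih (key _ hu _ ((G.mem_neighborFinset _ _).2 hadj))
  intro i
  obtain ⟨w⟩ := hG i0 i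
  exact walk0 i0 i w h0
end

section
/- Let g : [0,∞) → ℝ be twice differentiable such that g and its second derivative g'' are bounded. If (t_n) is a sequence with t_n → ∞ as n → ∞ and g(t_n) converges to liminf_{t→∞} g(t) (respectively, to limsup_{t→∞} g(t)), then g'(t_n) → 0 as n → ∞. -/
/-!
A bound `|g''| ≤ C` gives the one-sided Taylor estimates `g (t ± h) ≤ g t ± h g' t + C h²`.
If `|g' (t_n)| ≥ ε` infinitely often, stepping from `t_n` by `h = ε / 2C` in the direction in
which `g` descends lowers `g` by about `C h²` below `g (t_n) ≈ liminf g`, at points tending to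
infinity, which is impossible. The `limsup` case is the `liminf` case for `-g`.
-/

open Filter Topology Set

theorem Convex.norm_sub_sub_smul_deriv_le {E : Type*} [NormedAddCommGroup E] [NormedSpace ℝ E]
    {f f' f'' : ℝ → E} {s : Set ℝ} {C : ℝ} (hs : Convex ℝ s)
    (hf : ∀ x ∈ s, HasDerivWithinAt f (f' x) s x) (hf' : ∀ x ∈ s, HasDerivWithinAt f' (f'' x) s x)
    (hC : ∀ x ∈ s, ‖f'' x‖ ≤ C) {a b : ℝ} (ha : a ∈ s) (hb : b ∈ s) :
    ‖f b - f a - (b - a) • f' a‖ ≤ C * (b - a) ^ 2 := by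
  have hab : uIcc a b ⊆ s := hs.ordConnected.uIcc_subset ha hb
  have hderiv : ∀ x ∈ uIcc a b,
      HasDerivWithinAt (fun u => f u - (u - a) • f' a) (f' x - f' a) (uIcc a b) x := fun x hx => by
    simpa using ((hf x (hab hx)).mono hab).fun_sub
      (((hasDerivWithinAt_id x _).sub_const a).smul_const (f' a))
  have hlip : ∀ x ∈ uIcc a b, ‖f' x - f' a‖ ≤ C * |b - a| := fun x hx => by
    have hC0 : 0 ≤ C := (norm_nonneg _).trans (hC a ha)
    calc ‖f' x - f' a‖ ≤ C * ‖x - a‖ :=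
          hs.norm_image_sub_le_of_norm_hasDerivWithin_le hf' hC ha (hab hx)
      _ ≤ C * |b - a| := mul_le_mul_of_nonneg_left (abs_sub_left_of_mem_uIcc hx) hC0
  have := (convex_uIcc a b).norm_image_sub_le_of_norm_hasDerivWithin_le hderiv hlip
    left_mem_uIcc right_mem_uIcc
  simpa [sub_right_comm, mul_assoc, ← sq] using this

theorem tendsto_deriv_zero_of_quadratic_upper_bound {ι : Type*} {l : Filter ι} {g g' : ℝ → ℝ}
    {C L : ℝ} {t : ι → ℝ}
    (hbound : ∀ a b, 0 ≤ a → 0 ≤ b → g b ≤ g a + (b - a) * g' a + C * (b - a) ^ 2)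
    (hL : ∀ c < L, ∀ᶠ x in atTop, c < g x)
    (ht : Tendsto t l atTop) (hgt : Tendsto (fun i => g (t i)) l (𝓝 L)) :
    Tendsto (fun i => g' (t i)) l (𝓝 0) := by
  obtain ⟨K, hK, hCK⟩ : ∃ K > 0, C ≤ K := ⟨max C 1, by positivity, le_max_left _ _⟩
  refine Metric.tendsto_nhds.2 fun ε hε => ?_
  set h := ε / (2 * K)
  have hh : 0 < h := by positivity
  have hεh : ε * h = 2 * K * h ^ 2 := by simp only [h]; field_simp
  have hη : 0 < K * h ^ 2 := by positivity
  have hnear : ∀ᶠ i in l, g (t i) < L + K * h ^ 2 / 2 :=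
    hgt.eventually (gt_mem_nhds (by linarith))
  have hbelow : ∀ d, ∀ᶠ i in l, L - K * h ^ 2 / 2 < g (t i + d) := fun d =>
    (tendsto_atTop_add_const_right l d ht).eventually (hL _ (by linarith))
  filter_upwards [hnear, hbelow h, hbelow (-h), ht.eventually_ge_atTop h] with i hi hplus hminus hti
  have hup := hbound (t i) (t i + h) (by linarith) (by linarith)
  have hdown := hbound (t i) (t i + -h) (by linarith) (by linarith)
  simp only [add_sub_cancel_left, neg_sq] at hup hdown
  have hCh : C * h ^ 2 ≤ K * h ^ 2 := by gcongr
  -- `g (t i ± h) > g (t i) - K h²` and the two Taylor bounds give `h |g' (t i)| < 2 K h² = ε h`.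
  rw [Real.dist_eq, sub_zero, abs_lt]
  constructor <;> nlinarith

/-- If `g` is twice differentiable on `[0,∞)` with `g` and `g''` bounded, and
`g(t_n)` converges to `liminf_{t→∞} g(t)` (resp. `limsup_{t→∞} g(t)`) along a sequence
`t_n → ∞`, then `g'(t_n) → 0`. -/
theorem deriv_tendsto_zero_along_liminf_seq (g g' g'' : ℝ → ℝ)
    (hg' : ∀ t, 0 ≤ t → HasDerivAt g (g' t) t)
    (hg'' : ∀ t, 0 ≤ t → HasDerivAt g' (g'' t) t)
    (hgbdd : ∃ C : ℝ, ∀ t, 0 ≤ t → |g t| ≤ C)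
    (hg''bdd : ∃ C : ℝ, ∀ t, 0 ≤ t → |g'' t| ≤ C)
    (tn : ℕ → ℝ) (htn : Filter.Tendsto tn Filter.atTop Filter.atTop)
    (hconv :
      Filter.Tendsto (fun n => g (tn n)) Filter.atTop
          (nhds (Filter.liminf g Filter.atTop)) ∨
      Filter.Tendsto (fun n => g (tn n)) Filter.atTop
          (nhds (Filter.limsup g Filter.atTop))) :
    Filter.Tendsto (fun n => g' (tn n)) Filter.atTop (nhds 0) := by
  obtain ⟨C, hC⟩ := hg''bdd
  have htaylor (a b : ℝ) (ha : 0 ≤ a) (hb : 0 ≤ b) :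
      |g b - g a - (b - a) * g' a| ≤ C * (b - a) ^ 2 :=
    (convex_Ici 0).norm_sub_sub_smul_deriv_le (fun x hx => (hg' x hx).hasDerivWithinAt)
      (fun x hx => (hg'' x hx).hasDerivWithinAt) hC ha hb
  obtain ⟨hbddAbove, hbddBelow⟩ : IsBoundedUnder (· ≤ ·) atTop g ∧ IsBoundedUnder (· ≥ ·) atTop g := by
    obtain ⟨B, hB⟩ := hgbdd
    exact isBoundedUnder_le_abs.1 ⟨B, eventually_map.2 (eventually_ge_atTop 0 |>.mono hB)⟩
  rcases hconv with hliminf | hlimsup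
  · refine tendsto_deriv_zero_of_quadratic_upper_bound (C := C) (fun a b ha hb => ?_)
      (fun c hc => eventually_lt_of_lt_liminf hc hbddBelow) htn hliminf
    linarith [(abs_le.1 (htaylor a b ha hb)).2]
  · have := tendsto_deriv_zero_of_quadratic_upper_bound (g := -g) (g' := -g') (C := C) (L := -limsup g atTop)
      (fun a b ha hb => ?_) (fun c hc => ?_) htn hlimsup.neg
    · simpa using this.neg
    · simp only [Pi.neg_apply]
      linarith [(abs_le.1 (htaylor a b ha hb)).1]
    · exact (eventually_lt_of_limsup_lt (lt_neg.1 hc) hbddAbove).mono fun x hx => lt_neg.1 hx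
end

section
/- Assume D = 0 and T > 0, let G be a connected graph, and let a ∈ ℝ^L have all components strictly positive. Define the generator matrix Q(a) by Q(a)_{ij} = T·a_j/N_i(a) when i ~ j, Q(a)_{ij} = 0 when i ≠ j and i is not adjacent to j, and Q(a)_{ii} = −∑_{j ≠ i} Q(a)_{ij}. Let Z(a) = ∑_{i} a_i·N_i(a) and π_i = a_i·N_i(a)/Z(a). Then π is a probability vector (π_i > 0 and ∑_i π_i = 1), Q(a) is reversible with respect to π, i.e. π_i·Q(a)_{ij} = π_j·Q(a)_{ji} for all i ≠ j, and π is invariant: ∑_{i} π_i·Q(a)_{ij} = 0 for every j. -/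
open Finset Filter

/-! With weights `w_i = a_i N_i(a)`, the probability flux `w_i Q_ij = T a_i a_j` across an edge is
symmetric in `i` and `j`; this is detailed balance for `π = w / Z`, and since the rows of `Q`
sum to zero, summing detailed balance over `i` gives invariance. -/

theorem Matrix.sum_mul_eq_zero_of_detailed_balance {ι R : Type*} [Fintype ι] [DecidableEq ι]
    [CommRing R] (Q : Matrix ι ι R) (π : ι → R)
    (hdiag : ∀ i, Q i i = -∑ j ∈ univ.erase i, Q i j)
    (hrev : ∀ i j, i ≠ j → π i * Q i j = π j * Q j i) (j : ι) :
    ∑ i, π i * Q i j = 0 := by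
  have hoff : ∑ i ∈ univ.erase j, π i * Q i j = π j * ∑ i ∈ univ.erase j, Q j i := by
    rw [mul_sum]
    exact sum_congr rfl fun i hi => hrev i j (ne_of_mem_erase hi)
  rw [← sum_erase_add _ _ (mem_univ j), hoff, hdiag j]
  ring

theorem div_sum_pos_and_sum_div_sum_eq_one {ι : Type*} [Fintype ι] [Nonempty ι]
    (w : ι → ℝ) (hw : ∀ i, 0 < w i) :
    (∀ i, 0 < w i / ∑ j, w j) ∧ ∑ i, w i / ∑ j, w j = 1 := by
  have hsum : 0 < ∑ j, w j := sum_pos (fun j _ => hw j) univ_nonempty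
  exact ⟨fun i => div_pos (hw i) hsum, by rw [← sum_div, div_self hsum.ne']⟩

section Auxin

variable {L : ℕ} (G : SimpleGraph (Fin L)) [DecidableRel G.Adj] {κ : ℝ} {a : Fin L → ℝ}

theorem auxN_pos (hκ : 0 < κ) (ha : ∀ i, 0 ≤ a i) (i : Fin L) : 0 < auxN G κ a i :=
  add_pos_of_pos_of_nonneg hκ (sum_nonneg fun j _ => ha j)

theorem mul_auxN_mul_ite_div_auxN (T : ℝ) {i : Fin L} (hN : auxN G κ a i ≠ 0) (j : Fin L) :
    a i * auxN G κ a i * (if G.Adj i j then T * a j / auxN G κ a i else 0) =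
      if G.Adj i j then T * (a i * a j) else 0 := by
  split_ifs
  · field_simp
  · rw [mul_zero]

end Auxin

theorem auxin_generator_reversible_general {L : ℕ} (hL : 1 ≤ L) (G : SimpleGraph (Fin L))
    [DecidableRel G.Adj] (κ T : ℝ) (hκ : 0 < κ)
    (a : Fin L → ℝ) (ha : ∀ i, 0 < a i)
    (Q : Matrix (Fin L) (Fin L) ℝ)
    (hQoff : ∀ i j, i ≠ j →
      Q i j = if G.Adj i j then T * a j / auxN G κ a i else 0)
    (hQdiag : ∀ i, Q i i = -∑ j ∈ Finset.univ.erase i, Q i j)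
    (Z : ℝ) (hZ : Z = ∑ i, a i * auxN G κ a i)
    (π : Fin L → ℝ) (hπ : ∀ i, π i = a i * auxN G κ a i / Z) :
    (∀ i, 0 < π i) ∧ (∑ i, π i = 1) ∧
    (∀ i j, i ≠ j → π i * Q i j = π j * Q j i) ∧
    (∀ j, ∑ i, π i * Q i j = 0) := by
  have : Nonempty (Fin L) := Fin.pos_iff_nonempty.mp hL
  have hN := auxN_pos G hκ fun j => (ha j).le
  have hπ' : π = fun i => a i * auxN G κ a i / ∑ j, a j * auxN G κ a j := by
    ext i; rw [hπ, hZ]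
  obtain ⟨hπpos, hπsum⟩ := div_sum_pos_and_sum_div_sum_eq_one (fun i => a i * auxN G κ a i)
    fun i => mul_pos (ha i) (hN i)
  have hrev i j (hij : i ≠ j) : π i * Q i j = π j * Q j i := by
    rw [hπ, hπ, div_mul_eq_mul_div, div_mul_eq_mul_div, hQoff i j hij, hQoff j i hij.symm,
      mul_auxN_mul_ite_div_auxN G T (hN i).ne',
      mul_auxN_mul_ite_div_auxN G T (hN j).ne']
    simp only [G.adj_comm j i, mul_comm (a j)]
  exact ⟨hπ' ▸ hπpos, hπ' ▸ hπsum, hrev,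
    Matrix.sum_mul_eq_zero_of_detailed_balance Q π hQdiag hrev⟩

/-- For the pure transport generator (`D = 0`, `T > 0`) on a connected graph
and a strictly positive configuration `a`, the measure `π_i = a_i·N_i(a)/Z(a)` is a
probability vector, `Q(a)` is reversible with respect to `π`, and `π` is invariant. -/
theorem auxin_generator_reversible {L : ℕ} (hL : 1 ≤ L) (G : SimpleGraph (Fin L))
    [DecidableRel G.Adj] (hG : G.Connected) (κ T : ℝ) (hκ : 0 < κ) (hT : 0 < T)
    (a : Fin L → ℝ) (ha : ∀ i, 0 < a i)
    (Q : Matrix (Fin L) (Fin L) ℝ)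
    (hQoff : ∀ i j, i ≠ j →
      Q i j = if G.Adj i j then T * a j / auxN G κ a i else 0)
    (hQdiag : ∀ i, Q i i = -∑ j ∈ Finset.univ.erase i, Q i j)
    (Z : ℝ) (hZ : Z = ∑ i, a i * auxN G κ a i)
    (π : Fin L → ℝ) (hπ : ∀ i, π i = a i * auxN G κ a i / Z) :
    (∀ i, 0 < π i) ∧ (∑ i, π i = 1) ∧
    (∀ i j, i ≠ j → π i * Q i j = π j * Q j i) ∧
    (∀ j, ∑ i, π i * Q i j = 0) :=
  auxin_generator_reversible_general hL G κ T hκ a ha Q hQoff hQdiag Z hZ π hπ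
end

section
/- Assume D = 0 and T > 0, let G be a connected graph, and let a ∈ ℝ^L have all components strictly positive. Then f(a) = 0 if and only if Γ·a = c(a)·𝟙, where 𝟙 = (1,…,1)^T and c(a) = ⟨a, Γ·a⟩/⟨a, 𝟙⟩ = (∑_{i}∑_{j ~ i} a_i·a_j)/(∑_{i} a_i). -/
open Finset Filter

/-- For pure transport (`D = 0`, `T > 0`) on a connected graph and `a > 0`,
`f(a) = 0` iff `Γ·a = c(a)·𝟙` with `c(a) = (∑_i ∑_{j~i} a_i a_j)/(∑_i a_i)`. -/
theorem auxin_critical_iff_adjacency {L : ℕ} (hL : 1 ≤ L) (G : SimpleGraph (Fin L))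
    [DecidableRel G.Adj] (hG : G.Connected) (κ T : ℝ) (hκ : 0 < κ) (hT : 0 < T)
    (a : Fin L → ℝ) (ha : ∀ i, 0 < a i)
    (c : ℝ) (hc : c = (∑ i, ∑ j ∈ G.neighborFinset i, a i * a j) / ∑ i, a i) :
    (∀ i, auxF G κ 0 T a i = 0) ↔ (G.adjMatrix ℝ).mulVec a = fun _ => c := by
  classical
  haveI : NeZero L := ⟨Nat.one_le_iff_ne_zero.mp hL⟩
  set N := fun i => auxN G κ a i with hN
  have hNpos : ∀ i, 0 < N i := by
    intro i
    have h1 : (0:ℝ) ≤ ∑ j ∈ G.neighborFinset i, a j :=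
      Finset.sum_nonneg fun j _ => (ha j).le
    simp only [hN, auxN]; linarith
  constructor
  · intro hf
    have hS : ∀ i, ∑ k ∈ G.neighborFinset i,
        (a k * a i / N k - a i * a k / N i) = 0 := by
      intro i
      have h := hf i
      unfold auxF at h
      rw [zero_mul, zero_add] at h
      exact (mul_eq_zero.1 h).resolve_left hT.ne'
    obtain ⟨i₀, -, hmin⟩ := Finset.exists_min_image Finset.univ N Finset.univ_nonempty
    have hstep : ∀ i k, G.Adj i k → N i = N i₀ → N k = N i₀ := by
      intro i k hik hi
      have hnonpos : ∀ j ∈ G.neighborFinset i,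
          a j * a i / N j - a i * a j / N i ≤ 0 := by
        intro j hj
        have hNij : N i ≤ N j := hi ▸ hmin j (Finset.mem_univ j)
        have h1 : a j * a i / N j ≤ a j * a i / N i :=
          div_le_div_of_nonneg_left (mul_nonneg (ha j).le (ha i).le) (hNpos i) hNij
        rw [mul_comm (a i) (a j)]
        linarith
      have hzero := (Finset.sum_eq_zero_iff_of_nonpos hnonpos).1 (hS i) k
        (by rw [SimpleGraph.mem_neighborFinset]; exact hik)
      have hx : a k * a i ≠ 0 := (mul_pos (ha k) (ha i)).ne'
      have : a k * a i / N k = a k * a i / N i := by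
        rw [mul_comm (a i) (a k)] at hzero; linarith
      have h3 := (div_eq_div_iff (hNpos k).ne' (hNpos i).ne').1 this
      have hNik : N k = N i := (mul_left_cancel₀ hx h3).symm
      rw [hNik, hi]
    have hall : ∀ j, N j = N i₀ := by
      intro j
      obtain ⟨w⟩ := hG.preconnected i₀ j
      have key : ∀ {x y : Fin L} (w : G.Walk x y), N x = N i₀ → N y = N i₀ := by
        intro x y w
        induction w with
        | nil => exact fun h => h
        | cons h p ih => exact fun hx => ih (hstep _ _ h hx)
      exact key w rfl
    have hrow : ∀ i, ∑ j ∈ G.neighborFinset i, a j = ∑ j ∈ G.neighborFinset i₀, a j := by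
      intro i
      have h := hall i
      simp only [hN, auxN] at h
      linarith
    have hsum : (0:ℝ) < ∑ i, a i :=
      Finset.sum_pos (fun i _ => ha i) Finset.univ_nonempty
    have hcval : c = ∑ j ∈ G.neighborFinset i₀, a j := by
      rw [hc]
      have : ∑ i, ∑ j ∈ G.neighborFinset i, a i * a j
          = (∑ i, a i) * ∑ j ∈ G.neighborFinset i₀, a j := by
        rw [Finset.sum_mul]
        refine Finset.sum_congr rfl fun i _ => ?_
        rw [← Finset.mul_sum, hrow i]
      rw [this, mul_comm, mul_div_assoc, div_self hsum.ne', mul_one]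
    funext i
    rw [SimpleGraph.adjMatrix_mulVec_apply, hrow i, hcval]
  · intro h i
    have hrowc : ∀ j, ∑ k ∈ G.neighborFinset j, a k = c := by
      intro j
      have := congrFun h j
      rwa [SimpleGraph.adjMatrix_mulVec_apply] at this
    have hNc : ∀ j, auxN G κ a j = κ + c := by
      intro j; rw [auxN, hrowc j]
    unfold auxF
    rw [zero_mul, zero_add]
    have : ∑ k ∈ G.neighborFinset i,
        (a k * a i / auxN G κ a k - a i * a k / auxN G κ a i) = 0 := by
      refine Finset.sum_eq_zero fun k _ => ?_
      rw [hNc k, hNc i]; ring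
    rw [this, mul_zero]
end

section
/- Assume G is connected and both D > 0 and T > 0, and let φ ∈ ℝ^L be a fixed potential. For every a ∈ ℝ^L with all components strictly positive, the condition f_i(a) + ∑_{j ~ i}( a_j·φ_i − a_i·φ_j ) = 0 for all i holds if and only if there exists a constant c ∈ ℝ such that (a_i − D/T − φ_i/T)·N_i(a) + a_i = c·a_i·N_i(a) for every i = 1,…,L. -/
open Finset Filter

/-- Coupling with a potential `φ`: for a connected graph, `D > 0`, `T > 0` and
`a > 0`, `f_i(a) + ∑_{j~i}(a_j φ_i − a_i φ_j) = 0` for all `i` iff there is a constant `c`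
with `(a_i − D/T − φ_i/T)·N_i(a) + a_i = c·a_i·N_i(a)` for all `i`. -/
theorem auxin_critical_iff_quadratic_potential {L : ℕ} (hL : 1 ≤ L) (G : SimpleGraph (Fin L))
    [DecidableRel G.Adj] (hG : G.Connected) (κ D T : ℝ) (hκ : 0 < κ) (hD : 0 < D) (hT : 0 < T)
    (φ : Fin L → ℝ) (a : Fin L → ℝ) (ha : ∀ i, 0 < a i) :
    (∀ i, auxF G κ D T a i + ∑ j ∈ G.neighborFinset i, (a j * φ i - a i * φ j) = 0) ↔
      ∃ c : ℝ, ∀ i,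
        (a i - D / T - φ i / T) * auxN G κ a i + a i = c * (a i * auxN G κ a i) := by
  have hNpos : ∀ i, 0 < auxN G κ a i := by
    intro i
    have h0 : (0:ℝ) ≤ ∑ j ∈ G.neighborFinset i, a j :=
      Finset.sum_nonneg fun j _ => (ha j).le
    have : auxN G κ a i = κ + ∑ j ∈ G.neighborFinset i, a j := rfl
    linarith [this.ge]
  set w : Fin L → ℝ := fun i => (D + φ i) / a i - T / auxN G κ a i with hwdef
  have key : ∀ i, auxF G κ D T a i + ∑ j ∈ G.neighborFinset i, (a j * φ i - a i * φ j)
      = ∑ k ∈ G.neighborFinset i, a i * a k * (w i - w k) := by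
    intro i
    have : auxF G κ D T a i + ∑ j ∈ G.neighborFinset i, (a j * φ i - a i * φ j)
        = ∑ k ∈ G.neighborFinset i,
          (D * (a k - a i) + T * (a k * a i / auxN G κ a k - a i * a k / auxN G κ a i)
            + (a k * φ i - a i * φ k)) := by
      unfold auxF
      rw [Finset.mul_sum, Finset.mul_sum, ← Finset.sum_add_distrib, ← Finset.sum_add_distrib]
    rw [this]
    apply Finset.sum_congr rfl
    intro k _
    have hNi := (hNpos i).ne'
    have hNk := (hNpos k).ne'
    have hai := (ha i).ne'
    have hak := (ha k).ne'
    simp only [hwdef]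
    field_simp
    ring
  constructor
  · intro H
    obtain ⟨i0, -, hi0⟩ := Finset.exists_max_image Finset.univ w ⟨⟨0, hL⟩, Finset.mem_univ _⟩
    have step : ∀ i, w i = w i0 → ∀ k ∈ G.neighborFinset i, w k = w i0 := by
      intro i hi k hk
      have hsum : ∑ k ∈ G.neighborFinset i, a i * a k * (w i - w k) = 0 := by
        rw [← key]; exact H i
      have hnn : ∀ j ∈ G.neighborFinset i, 0 ≤ a i * a j * (w i - w j) := by
        intro j _
        have hj : w j ≤ w i := hi ▸ hi0 j (Finset.mem_univ j)
        have := mul_pos (ha i) (ha j)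
        nlinarith
      have hzero := (Finset.sum_eq_zero_iff_of_nonneg hnn).mp hsum k hk
      have haik : a i * a k ≠ 0 := (mul_pos (ha i) (ha k)).ne'
      rcases mul_eq_zero.mp hzero with h | h
      · exact absurd h haik
      · linarith [sub_eq_zero.mp h, hi]
    have walkstep : ∀ u v : Fin L, G.Walk u v → w u = w i0 → w v = w i0 := by
      intro u v p
      induction p with
      | nil => exact id
      | cons h p ih =>
        intro hu
        exact ih (step _ hu _ ((SimpleGraph.mem_neighborFinset _ _ _).mpr h))
    have hconst : ∀ i, w i = w i0 := fun i =>
      (hG.preconnected i0 i).elim fun p => walkstep i0 i p rfl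
    refine ⟨1 - w i0 / T, fun i => ?_⟩
    have hwi : (D + φ i) / a i - T / auxN G κ a i = w i0 := hconst i
    have hNi := (hNpos i).ne'
    have hai := (ha i).ne'
    have hTne := hT.ne'
    generalize hgen : w i0 = W at hwi ⊢
    field_simp at hwi ⊢
    linear_combination -hwi
  · rintro ⟨c, hc⟩ i
    rw [key]
    have hwc : ∀ j, w j = T - T * c := by
      intro j
      have hj := hc j
      have hNj := (hNpos j).ne'
      have haj := (ha j).ne'
      have hTne := hT.ne'
      field_simp at hj
      simp only [hwdef]
      field_simp
      linear_combination -hj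
    apply Finset.sum_eq_zero
    intro k _
    rw [hwc i, hwc k]; ring
end

section
/- Assume D = 0. Then the set of critical points of the auxin transport system in the nonnegative orthant, { a ∈ ℝ^L : a_i ≥ 0 for all i and f(a) = 0 }, is not countable. -/
open Finset Filter

/-- For pure transport (`D = 0`), the set of nonnegative critical points is
not countable. -/
theorem auxin_critical_set_uncountable {L : ℕ} (hL : 1 ≤ L) (G : SimpleGraph (Fin L))
    [DecidableRel G.Adj] (κ T : ℝ) (hκ : 0 < κ) (hT : 0 < T) :
    ¬ Set.Countable
      {x : Fin L → ℝ | (∀ i, 0 ≤ x i) ∧ ∀ i, auxF G κ 0 T x i = 0} := by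
  intro hS
  set i0 : Fin L := ⟨0, hL⟩ with hi0
  have hmem : ∀ c : ℝ, 0 ≤ c →
      (fun i => if i = i0 then c else 0) ∈
        {x : Fin L → ℝ | (∀ i, 0 ≤ x i) ∧ ∀ i, auxF G κ 0 T x i = 0} := by
    intro c hc
    constructor
    · intro i
      by_cases h : i = i0 <;> simp [h, hc]
    · intro i
      simp only [auxF, zero_mul, zero_add]
      rw [Finset.sum_eq_zero, mul_zero]
      intro k hk
      have hadj : G.Adj i k := by simpa using hk
      have hki : k ≠ i := (G.ne_of_adj hadj).symm
      by_cases hi : i = i0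
      · have hk0 : k ≠ i0 := by rw [hi] at hki; exact hki
        simp [hk0]
      · simp [hi]
  have himg : Set.Ici (0 : ℝ) ⊆
      (fun x : Fin L → ℝ => x i0) '' {x : Fin L → ℝ | (∀ i, 0 ≤ x i) ∧ ∀ i, auxF G κ 0 T x i = 0} := by
    intro c hc
    exact ⟨fun i => if i = i0 then c else 0, hmem c hc, by simp⟩
  have hIci : (Set.Ici (0 : ℝ)).Countable := (hS.image _).mono himg
  have hIic : (Set.Iic (0 : ℝ)).Countable := by
    have : Set.Iic (0 : ℝ) ⊆ Neg.neg '' Set.Ici (0 : ℝ) := by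
      intro x hx
      exact ⟨-x, by simpa using hx, by simp⟩
    exact (hIci.image _).mono this
  have : (Set.univ : Set ℝ).Countable := by
    have : (Set.univ : Set ℝ) ⊆ Set.Iic 0 ∪ Set.Ici 0 := by
      intro x _
      rcases le_total x 0 with h | h
      · exact Or.inl h
      · exact Or.inr h
    exact (hIic.union hIci).mono this
  exact Cardinal.not_countable_real this
end

section
/- Assume D = 0 and T = 1. Let a ∈ ℝ^L have all components strictly positive and satisfy Γ·a = c·𝟙 for some constant c > 0, and set N = κ + c. Then f is differentiable at a and its Jacobian matrix, with entries (∂f_i/∂a_j)(a), equals (1/N²)·d(a)·Γ·( c·I − d(a)·Γ ), where d(a) is the diagonal matrix with diagonal entries a_1,…,a_L and I is the identity matrix. -/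
open Finset Filter

/-!
Write `f_i(x) = ∑_{k ~ i} x_i x_k (N_k(x)⁻¹ - N_i(x)⁻¹)`. At `a` every `N_k(a)` equals
`N = κ + c`, so the bracket vanishes and only its derivative `((Γ v)_i - (Γ v)_k) / N²`
contributes, multiplied by `a_i a_k`. Summing over `k ~ i` and using `∑_{k ~ i} a_k = c`
gives `(1/N²) a_i (c (Γ v)_i - ∑_{k ~ i} a_k (Γ v)_k)`, the `i`-th entry of the claimed
matrix applied to `v`.
-/

open Matrix

theorem HasFDerivAt.mul_of_right_eq_zero {𝕜 E : Type*} [NontriviallyNormedField 𝕜]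
    [NormedAddCommGroup E] [NormedSpace 𝕜 E] {f g : E → 𝕜} {f' g' : E →L[𝕜] 𝕜} {x : E}
    (hf : HasFDerivAt f f' x) (hg : HasFDerivAt g g' x) (hgx : g x = 0) :
    HasFDerivAt (fun y => f y * g y) (f x • g') x :=
  (hf.mul hg).congr_fderiv (by ext; simp [hgx])

section

variable {L : ℕ} (G : SimpleGraph (Fin L)) [DecidableRel G.Adj]

noncomputable def SimpleGraph.adjMatrixRowCLM (k : Fin L) : (Fin L → ℝ) →L[ℝ] ℝ :=
  (ContinuousLinearMap.proj k).comp (G.adjMatrix ℝ).mulVecLin.toContinuousLinearMap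

@[simp]
theorem SimpleGraph.adjMatrixRowCLM_apply (k : Fin L) (v : Fin L → ℝ) :
    G.adjMatrixRowCLM k v = (G.adjMatrix ℝ *ᵥ v) k := by
  simp [adjMatrixRowCLM]

theorem SimpleGraph.diagonal_mul_adjMatrix_mul_sub_mulVec_apply {a : Fin L → ℝ} {c : ℝ}
    {i : Fin L} (hca : (G.adjMatrix ℝ *ᵥ a) i = c) (v : Fin L → ℝ) :
    ((diagonal a * G.adjMatrix ℝ * (c • 1 - diagonal a * G.adjMatrix ℝ)) *ᵥ v) i =
      ∑ k ∈ G.neighborFinset i,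
        a i * a k * ((G.adjMatrix ℝ *ᵥ v) i - (G.adjMatrix ℝ *ᵥ v) k) := by
  rw [← mulVec_mulVec, ← mulVec_mulVec, sub_mulVec, smul_mulVec, one_mulVec, ← mulVec_mulVec,
    mulVec_sub, mulVec_smul, mulVec_diagonal, Pi.sub_apply, Pi.smul_apply,
    adjMatrix_mulVec_apply G i (diagonal a *ᵥ _), ← hca, adjMatrix_mulVec_apply G i a]
  simp only [mulVec_diagonal, smul_eq_mul, sum_mul, mul_sum, ← sum_sub_distrib]
  exact sum_congr rfl fun k _ => by ring

theorem auxN_eq_adjMatrix_mulVec (κ : ℝ) (x : Fin L → ℝ) (i : Fin L) :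
    auxN G κ x i = κ + (G.adjMatrix ℝ *ᵥ x) i := by
  rw [auxN, SimpleGraph.adjMatrix_mulVec_apply]

theorem auxF_zero_one_apply (κ : ℝ) (x : Fin L → ℝ) (i : Fin L) :
    auxF G κ 0 1 x i =
      ∑ k ∈ G.neighborFinset i, x i * x k * ((auxN G κ x k)⁻¹ - (auxN G κ x i)⁻¹) := by
  simp only [auxF, zero_mul, zero_add, one_mul, div_eq_mul_inv]
  exact sum_congr rfl fun k _ => by ring

theorem hasFDerivAt_auxN (κ : ℝ) (x : Fin L → ℝ) (k : Fin L) :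
    HasFDerivAt (fun y => auxN G κ y k) (G.adjMatrixRowCLM k) x := by
  simp_rw [auxN_eq_adjMatrix_mulVec]
  exact (G.adjMatrixRowCLM k).hasFDerivAt.const_add κ

theorem hasFDerivAt_auxN_inv (κ : ℝ) {x : Fin L → ℝ} {k : Fin L} (hx : auxN G κ x k ≠ 0) :
    HasFDerivAt (fun y => (auxN G κ y k)⁻¹)
      (-(auxN G κ x k ^ 2)⁻¹ • G.adjMatrixRowCLM k) x :=
  (hasDerivAt_inv hx).comp_hasFDerivAt x (hasFDerivAt_auxN G κ x k)

theorem hasFDerivAt_auxF_apply_of_auxN_eq {κ N : ℝ} {a : Fin L → ℝ} (hN : N ≠ 0)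
    (haN : ∀ k, auxN G κ a k = N) (i : Fin L) :
    HasFDerivAt (fun x => auxF G κ 0 1 x i)
      (∑ k ∈ G.neighborFinset i,
        (a i * a k / N ^ 2) • (G.adjMatrixRowCLM i - G.adjMatrixRowCLM k)) a := by
  simp_rw [auxF_zero_one_apply]
  refine HasFDerivAt.fun_sum fun k _ => ?_
  have haN₀ : ∀ j, auxN G κ a j ≠ 0 := fun j => haN j ▸ hN
  refine (((hasFDerivAt_apply i a).mul (hasFDerivAt_apply k a)).mul_of_right_eq_zero
    ((hasFDerivAt_auxN_inv G κ (haN₀ k)).sub (hasFDerivAt_auxN_inv G κ (haN₀ i)))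
    (by simp [haN])).congr_fderiv ?_
  ext v
  simp [haN]
  ring

end

theorem auxin_jacobian_at_critical_general {L : ℕ} (G : SimpleGraph (Fin L))
    [DecidableRel G.Adj] (κ : ℝ) (hκ : 0 < κ)
    (a : Fin L → ℝ)
    (c : ℝ) (hc : 0 < c) (hca : (G.adjMatrix ℝ).mulVec a = fun _ => c)
    (N : ℝ) (hN : N = κ + c) :
    HasFDerivAt (fun x => auxF G κ 0 1 x)
      (LinearMap.toContinuousLinearMap
        (Matrix.mulVecLin
          ((1 / N ^ 2) •
            (Matrix.diagonal a * G.adjMatrix ℝ *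
              (c • (1 : Matrix (Fin L) (Fin L) ℝ) -
                Matrix.diagonal a * G.adjMatrix ℝ))))) a := by
  have haN : ∀ k, auxN G κ a k = N := fun k => by
    rw [auxN_eq_adjMatrix_mulVec, hca, hN]
  have hN₀ : N ≠ 0 := by rw [hN]; positivity
  refine hasFDerivAt_pi'.2 fun i =>
    (hasFDerivAt_auxF_apply_of_auxN_eq G hN₀ haN i).congr_fderiv ?_
  ext v
  simp only [ContinuousLinearMap.coe_comp, Function.comp_apply, ContinuousLinearMap.proj_apply,
    LinearMap.coe_toContinuousLinearMap', mulVecLin_apply, smul_mulVec, Pi.smul_apply,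
    G.diagonal_mul_adjMatrix_mul_sub_mulVec_apply (congrFun hca i), _root_.sum_apply,
    _root_.smul_apply, _root_.sub_apply, SimpleGraph.adjMatrixRowCLM_apply, smul_eq_mul, mul_sum]
  exact sum_congr rfl fun k _ => by ring

/-- For pure transport (`D = 0`, `T = 1`) at a positive critical point with
`Γ·a = c·𝟙` and `N = κ + c`, the Jacobian of `f` at `a` is
`(1/N²)·d(a)·Γ·(c·I − d(a)·Γ)`. -/
theorem auxin_jacobian_at_critical {L : ℕ} (hL : 1 ≤ L) (G : SimpleGraph (Fin L))
    [DecidableRel G.Adj] (κ : ℝ) (hκ : 0 < κ)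
    (a : Fin L → ℝ) (ha : ∀ i, 0 < a i)
    (c : ℝ) (hc : 0 < c) (hca : (G.adjMatrix ℝ).mulVec a = fun _ => c)
    (N : ℝ) (hN : N = κ + c) :
    HasFDerivAt (fun x => auxF G κ 0 1 x)
      (LinearMap.toContinuousLinearMap
        (Matrix.mulVecLin
          ((1 / N ^ 2) •
            (Matrix.diagonal a * G.adjMatrix ℝ *
              (c • (1 : Matrix (Fin L) (Fin L) ℝ) -
                Matrix.diagonal a * G.adjMatrix ℝ))))) a :=
  auxin_jacobian_at_critical_general G κ hκ a c hc hca N hN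
end
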